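/- Fix p ∈ (0,1) and ε ∈ (0, 1/2). For any γ > 0 there exists δ₁ > 0 such that for all sufficiently large r, with a = r^{p−1}, the following holds: if x ∈ ℝ^K has all coordinates positive and satisfies |Σ_{k∈K} k_i x_k − ρ_i| ≤ r^{−1/2+ε}/|I| for all i ∈ I, and |χ_{k,k',i}(x)| ≤ δ₁ for all pairs of edges (k,i), (k',i) ∈ M, then L^(a)(x) − L* ≤ γ. -/

import Mathlib

open Finset Filter

/-- `c_k = ∏_i (k_i)!`. -/
noncomputable def confC {I : Type*} [Fintype I] (k : I → ℕ) : ℝ :=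
  ∏ i, (Nat.factorial (k i) : ℝ)

/-- The Lyapunov function `L^(a)`. -/
noncomputable def Lfun {I : Type*} [Fintype I] [DecidableEq I]
    (Kbar : Finset (I → ℕ)) (a : ℝ) (x : (I → ℕ) → ℝ) : ℝ :=
  -(1 / Real.log a) *
    ∑ k ∈ Kbar.erase 0, x k * Real.log (x k * confC k / (Real.exp 1 * a))

/-- The coordinates of `x` extended by the convention `x_0 = a`. -/
def xeDef {I : Type*} [Fintype I]
    (a : ℝ) (x : (I → ℕ) → ℝ) (m : I → ℕ) : ℝ :=
  if m = 0 then a else x m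

/-- `χ_{k,k',i}(x)`, with the convention `x_0 = a`. -/
noncomputable def chiDef {I : Type*} [Fintype I] [DecidableEq I]
    (a : ℝ) (x : (I → ℕ) → ℝ) (k k' : I → ℕ) (i : I) : ℝ :=
  Real.log ((k' i : ℝ) * xeDef a x (k - Pi.single i 1) * xeDef a x k')
    - Real.log ((k i : ℝ) * xeDef a x k * xeDef a x (k' - Pi.single i 1))

/-- `(k, i)` is an edge. -/
def isEdge {I : Type*} [Fintype I] [DecidableEq I]
    (Kbar : Finset (I → ℕ)) (k : I → ℕ) (i : I) : Prop :=
  k ∈ Kbar.erase 0 ∧ 1 ≤ k i ∧ k - Pi.single i 1 ∈ Kbar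

/-- The optimal value `L*` of the linear program (LP). -/
noncomputable def LPvalue {I : Type*} [Fintype I] [DecidableEq I]
    (Kbar : Finset (I → ℕ)) (ρ : I → ℝ) : ℝ :=
  sInf {v : ℝ | ∃ x : (I → ℕ) → ℝ,
    ((∀ k ∈ Kbar.erase 0, 0 ≤ x k) ∧
      ∀ i : I, ∑ k ∈ Kbar.erase 0, (k i : ℝ) * x k = ρ i) ∧
    v = ∑ k ∈ Kbar.erase 0, x k}

/-!
Write `b = -log a` and call `φ_k = log (x_k c_k / a)` the potential, so that
`L^(a)(x) = b⁻¹ ∑_k x_k (φ_k - 1)` and, with the convention `x_0 = a`, `φ_0 = 0`. Along two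
edges `(k, i)`, `(k', i)`, `χ` is the mixed second difference
`(φ_{k'} - φ_{k'-e_i}) - (φ_k - φ_{k-e_i})`; taking `k' = e_i` and walking down from `k` to `0`
shows that `φ` is linear up to a defect `θ_k = φ_k - ∑_i k_i φ_{e_i}` with `|θ_k| ≤ |k| δ₁`.
Hence, with `q_i = φ_{e_i} / b` and `ρ̂_i = ∑_k k_i x_k`, one has
`L^(a)(x) = ∑_i ρ̂_i q_i + O(1/b)` and `∑_i k_i q_i ≤ 1 + O(1/b)` on `K`, so `q - O(1/b)` is
feasible for the dual of (LP) and weak duality gives `∑_i ρ_i q_i ≤ L* + O(1/b)`.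
The vector `q` is bounded: from above because `x_k ≤ ρ̂_i ≤ 2ρ_i` whenever `k_i ≥ 1`, from below
because `ρ̂_i ≥ ρ_i / 2` forces some `x_k` with `k_i ≥ 1` to be of order one. So `|ρ̂ - ρ| ≤ η`
yields `L^(a)(x) - L* ≤ C₁ / b + C₂ η`, where `b = (1 - p) log r → ∞` and `η = r^{-1/2+ε} → 0`.
The constants do not depend on `δ₁ ≤ 1`, so `δ₁ = 1` works.
-/

theorem sub_single_add_single {I : Type*} [DecidableEq I] {k : I → ℕ} {i : I} (hi : 1 ≤ k i) :
    k - Pi.single i 1 + Pi.single i 1 = k := by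
  refine tsub_add_cancel_of_le fun j => ?_
  by_cases hj : j = i
  · subst hj; simpa using hi
  · simp [hj]

theorem exists_eq_add_single_of_ne_zero {I : Type*} [DecidableEq I] {k : I → ℕ} (hk : k ≠ 0) :
    ∃ (i : I) (k' : I → ℕ), k = k' + Pi.single i 1 := by
  obtain ⟨i, hi⟩ := Function.ne_iff.mp hk
  exact ⟨i, _, (sub_single_add_single (Nat.one_le_iff_ne_zero.mpr hi)).symm⟩

section Configurations

variable {I : Type*} [Fintype I]

def degree (k : I → ℕ) : ℕ := ∑ i, k i

theorem le_degree (k : I → ℕ) (i : I) : k i ≤ degree k :=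
  single_le_sum (fun j _ => Nat.zero_le (k j)) (mem_univ i)

theorem degree_eq_zero {k : I → ℕ} : degree k = 0 ↔ k = 0 := by
  simp [degree, funext_iff]

theorem confC_pos (k : I → ℕ) : 0 < confC k :=
  prod_pos fun i _ => by positivity

theorem one_le_confC (k : I → ℕ) : 1 ≤ confC k := by
  unfold confC
  exact_mod_cast prod_pos fun i _ => (k i).factorial_pos

theorem confC_le_factorial_degree (k : I → ℕ) : confC k ≤ (degree k).factorial := by
  unfold confC degree
  exact_mod_cast Nat.le_of_dvd (Nat.factorial_pos _) (Nat.prod_factorial_dvd_factorial_sum univ k)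

variable [DecidableEq I]

theorem degree_add_single (k : I → ℕ) (i : I) :
    degree (k + Pi.single i 1) = degree k + 1 := by
  simp [degree, sum_add_distrib]

theorem sum_add_single_mul (k : I → ℕ) (i : I) (f : I → ℝ) :
    ∑ j, ((k + Pi.single i 1 : I → ℕ) j : ℝ) * f j = ∑ j, (k j : ℝ) * f j + f i := by
  simp [add_mul, sum_add_distrib, Pi.single_apply]

theorem confC_add_single (k : I → ℕ) (i : I) :
    confC (k + Pi.single i 1) = (k i + 1) * confC k := by
  simp only [confC, Pi.add_apply]
  rw [← mul_prod_erase _ _ (mem_univ i), ← mul_prod_erase univ _ (mem_univ i), ← mul_assoc]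
  congr 1
  · simp [Nat.factorial_succ]
  · exact prod_congr rfl fun j hj => by simp [ne_of_mem_erase hj]

theorem isEdge_add_single {Kbar : Finset (I → ℕ)}
    (hmono : ∀ k ∈ Kbar, ∀ k' : I → ℕ, (∀ i, k' i ≤ k i) → k' ∈ Kbar)
    {k : I → ℕ} {i : I} (hk : k + Pi.single i 1 ∈ Kbar) :
    isEdge Kbar (k + Pi.single i 1) i := by
  refine ⟨mem_erase.mpr ⟨fun h => ?_, hk⟩, by simp, ?_⟩
  · simpa using congrFun h i
  · rw [add_tsub_cancel_right]
    exact hmono _ hk k fun j => by simp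

theorem abs_le_degree_mul_of_forall_add_single {Kbar : Finset (I → ℕ)}
    (hmono : ∀ k ∈ Kbar, ∀ k' : I → ℕ, (∀ i, k' i ≤ k i) → k' ∈ Kbar)
    {f : (I → ℕ) → ℝ} (hf0 : f 0 = 0) {δ : ℝ}
    (hf : ∀ k i, k + Pi.single i 1 ∈ Kbar → |f (k + Pi.single i 1) - f k| ≤ δ) :
    ∀ k ∈ Kbar, |f k| ≤ degree k * δ := by
  suffices H : ∀ n : ℕ, ∀ k ∈ Kbar, degree k = n → |f k| ≤ n * δ from
    fun k hk => H _ k hk rfl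
  intro n
  induction n with
  | zero =>
    intro k _ hk
    simp [degree_eq_zero.mp hk, hf0]
  | succ n ih =>
    intro k hk hdeg
    obtain ⟨i, k', rfl⟩ := exists_eq_add_single_of_ne_zero (k := k)
      (fun h => by simp [h, degree] at hdeg)
    have hk' : k' ∈ Kbar := hmono _ hk k' fun j => by simp
    have hk'δ := ih k' hk' (by simpa [degree_add_single] using hdeg)
    have hstep := hf k' i hk
    have := abs_sub_abs_le_abs_sub (f (k' + Pi.single i 1)) (f k')
    push_cast
    linarith

end Configurations

section Potential

variable {I : Type*} [Fintype I] {a : ℝ} {x : (I → ℕ) → ℝ}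

noncomputable def potential (a : ℝ) (x : (I → ℕ) → ℝ) (k : I → ℕ) : ℝ :=
  Real.log (xeDef a x k * confC k / a)

theorem xeDef_pos {Kbar : Finset (I → ℕ)} (ha : 0 < a) (hx : ∀ k ∈ Kbar.erase 0, 0 < x k)
    {k : I → ℕ} (hk : k ∈ Kbar) : 0 < xeDef a x k := by
  unfold xeDef
  split_ifs with h
  · exact ha
  · exact hx k (mem_erase.mpr ⟨h, hk⟩)

theorem potential_zero (ha : a ≠ 0) : potential a x 0 = 0 := by
  simp [potential, xeDef, confC, ha]

theorem potential_eq (ha : 0 < a) {k : I → ℕ} (hk : 0 < xeDef a x k) :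
    potential a x k = Real.log (xeDef a x k) + Real.log (confC k) - Real.log a := by
  rw [potential, Real.log_div (mul_pos hk (confC_pos k)).ne' ha.ne',
    Real.log_mul hk.ne' (confC_pos k).ne']

variable [DecidableEq I]

noncomputable def potentialDefect (a : ℝ) (x : (I → ℕ) → ℝ) (k : I → ℕ) : ℝ :=
  potential a x k - ∑ i, (k i : ℝ) * potential a x (Pi.single i 1)

theorem chiDef_add_single (ha : 0 < a) {k k' : I → ℕ} {i : I}
    (hk : 0 < xeDef a x k) (hki : 0 < xeDef a x (k + Pi.single i 1))
    (hk' : 0 < xeDef a x k') (hk'i : 0 < xeDef a x (k' + Pi.single i 1)) :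
    chiDef a x (k + Pi.single i 1) (k' + Pi.single i 1) i =
      (potential a x (k' + Pi.single i 1) - potential a x k')
        - (potential a x (k + Pi.single i 1) - potential a x k) := by
  simp only [chiDef, add_tsub_cancel_right, Pi.add_apply, Pi.single_eq_same]
  rw [potential_eq ha hk, potential_eq ha hki, potential_eq ha hk', potential_eq ha hk'i,
    confC_add_single, confC_add_single, Real.log_mul (by positivity) (confC_pos k).ne',
    Real.log_mul (by positivity) (confC_pos k').ne',
    Real.log_mul (by positivity) hk'i.ne', Real.log_mul (by positivity) hk.ne',
    Real.log_mul (by positivity) hk'.ne', Real.log_mul (by positivity) hki.ne']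
  push_cast
  ring

theorem potentialDefect_add_single_sub (ha : 0 < a) {k : I → ℕ} {i : I}
    (hk : 0 < xeDef a x k) (hki : 0 < xeDef a x (k + Pi.single i 1))
    (hi : 0 < xeDef a x (Pi.single i 1)) :
    potentialDefect a x (k + Pi.single i 1) - potentialDefect a x k =
      -chiDef a x (k + Pi.single i 1) (Pi.single i 1) i := by
  have h0 : 0 < xeDef a x 0 := by simpa [xeDef] using ha
  have hchi := chiDef_add_single ha hk hki h0 (by simpa using hi)
  rw [zero_add, potential_zero ha.ne'] at hchi
  rw [hchi, potentialDefect, potentialDefect, sum_add_single_mul]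
  ring

theorem abs_potentialDefect_le {Kbar : Finset (I → ℕ)}
    (hunit : ∀ i : I, Pi.single i 1 ∈ Kbar)
    (hmono : ∀ k ∈ Kbar, ∀ k' : I → ℕ, (∀ i, k' i ≤ k i) → k' ∈ Kbar)
    (ha : 0 < a) (hx : ∀ k ∈ Kbar.erase 0, 0 < x k) {δ : ℝ}
    (hchi : ∀ i : I, ∀ k k' : I → ℕ, isEdge Kbar k i → isEdge Kbar k' i →
      |chiDef a x k k' i| ≤ δ) :
    ∀ k ∈ Kbar, |potentialDefect a x k| ≤ degree k * δ := by
  refine abs_le_degree_mul_of_forall_add_single hmono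
    (by simp [potentialDefect, potential_zero ha.ne']) fun k i hki => ?_
  have hk : k ∈ Kbar := hmono _ hki k fun j => by simp
  have hi : (0 : I → ℕ) + Pi.single i 1 ∈ Kbar := by simpa using hunit i
  rw [potentialDefect_add_single_sub ha (xeDef_pos ha hx hk) (xeDef_pos ha hx hki)
    (xeDef_pos ha hx (hunit i)), abs_neg]
  exact hchi i _ _ (isEdge_add_single hmono hki) (by simpa using isEdge_add_single hmono hi)

end Potential

section LinearProgram

variable {I : Type*} [Fintype I] [DecidableEq I] {Kbar : Finset (I → ℕ)}

def load (Kbar : Finset (I → ℕ)) (x : (I → ℕ) → ℝ) (i : I) : ℝ :=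
  ∑ k ∈ Kbar.erase 0, (k i : ℝ) * x k

theorem le_LPvalue_of_dual_feasible (hunit : ∀ i : I, Pi.single i 1 ∈ Kbar)
    {ρ : I → ℝ} (hρ : ∀ i, 0 ≤ ρ i) {q : I → ℝ}
    (hq : ∀ k ∈ Kbar.erase 0, ∑ i, (k i : ℝ) * q i ≤ 1) :
    ∑ i, ρ i * q i ≤ LPvalue Kbar ρ := by
  apply le_csInf
  · refine ⟨_, fun k => ∑ j, if k = Pi.single j 1 then ρ j else 0,
      ⟨fun k _ => sum_nonneg fun j _ => by split_ifs <;> simp [hρ j], fun i => ?_⟩, rfl⟩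
    simp only [mul_sum, mul_ite, mul_zero]
    rw [sum_comm]
    simp [mem_erase, hunit, Pi.single_apply]
  · rintro _ ⟨z, ⟨hz0, hz⟩, rfl⟩
    calc ∑ i, ρ i * q i = ∑ k ∈ Kbar.erase 0, z k * ∑ i, (k i : ℝ) * q i := by
          simp only [← hz, sum_mul, mul_sum]
          rw [sum_comm]
          exact sum_congr rfl fun _ _ => sum_congr rfl fun _ _ => by ring
      _ ≤ ∑ k ∈ Kbar.erase 0, z k * 1 :=
          sum_le_sum fun k hk => mul_le_mul_of_nonneg_left (hq k hk) (hz0 k hk)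
      _ = ∑ k ∈ Kbar.erase 0, z k := by simp

theorem Lfun_eq_sum_potential {a b : ℝ} {x : (I → ℕ) → ℝ} (ha : 0 < a)
    (hab : Real.log a = -b) (hx : ∀ k ∈ Kbar.erase 0, 0 < x k) :
    Lfun Kbar a x = (∑ k ∈ Kbar.erase 0, x k * (potentialDefect a x k - 1)
        + ∑ i, load Kbar x i * potential a x (Pi.single i 1)) / b := by
  have hterm : ∀ k ∈ Kbar.erase 0, x k * Real.log (x k * confC k / (Real.exp 1 * a)) =
      x k * (potentialDefect a x k - 1)
        + ∑ i, (k i : ℝ) * x k * potential a x (Pi.single i 1) := by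
    intro k hk
    have hxe : xeDef a x k = x k := if_neg (ne_of_mem_erase hk)
    have hsum : ∑ i, (k i : ℝ) * x k * potential a x (Pi.single i 1) =
        x k * ∑ i, (k i : ℝ) * potential a x (Pi.single i 1) := by
      rw [mul_sum]
      exact sum_congr rfl fun _ _ => by ring
    have hpos : 0 < x k * confC k / a := by have := hx k hk; have := confC_pos k; positivity
    rw [hsum, mul_comm (Real.exp 1), ← div_div, Real.log_div hpos.ne' (Real.exp_pos 1).ne',
      Real.log_exp, potentialDefect, potential, hxe]
    ring
  rw [Lfun, sum_congr rfl hterm, sum_add_distrib, sum_comm, hab]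
  simp only [load, sum_mul]
  ring

end LinearProgram

section Estimate

variable {I : Type*} [Fintype I] {Kbar : Finset (I → ℕ)} {a b : ℝ}
  {x : (I → ℕ) → ℝ}

theorem le_of_load_le (hx : ∀ k ∈ Kbar.erase 0, 0 ≤ x k) {B : ℝ}
    (hB : ∀ i, load Kbar x i ≤ B) : ∀ k ∈ Kbar.erase 0, x k ≤ B := by
  intro k hk
  obtain ⟨i, hi⟩ := Function.ne_iff.mp (ne_of_mem_erase hk)
  calc x k ≤ k i * x k :=
        le_mul_of_one_le_left (hx k hk) (by exact_mod_cast Nat.one_le_iff_ne_zero.mpr hi)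
    _ ≤ load Kbar x i := single_le_sum (f := fun k => (k i : ℝ) * x k)
        (fun k hk => mul_nonneg (Nat.cast_nonneg _) (hx k hk)) hk
    _ ≤ B := hB i

theorem exists_load_le_mul (hx : ∀ k ∈ Kbar.erase 0, 0 ≤ x k) {i : I}
    (hi : 0 < load Kbar x i) :
    ∃ k ∈ Kbar.erase 0, 1 ≤ k i ∧
      load Kbar x i ≤ #(Kbar.erase 0) * Kbar.sup degree * x k := by
  have hne : (Kbar.erase 0).Nonempty := nonempty_of_sum_ne_zero hi.ne'
  have hN : (0 : ℝ) < #(Kbar.erase 0) := by exact_mod_cast hne.card_pos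
  obtain ⟨k, hk, hle⟩ := exists_le_of_sum_le hne (f := fun _ => load Kbar x i / #(Kbar.erase 0))
    (g := fun k => (k i : ℝ) * x k) (by simp [mul_div_cancel₀ _ hN.ne', load])
  have hki : k i ≠ 0 := by
    rintro h
    simp only [h, Nat.cast_zero, zero_mul] at hle
    exact (div_pos hi hN).not_ge hle
  have hkm : (k i : ℝ) ≤ Kbar.sup degree := by
    exact_mod_cast (le_degree k i).trans (le_sup (mem_of_mem_erase hk))
  refine ⟨k, hk, Nat.one_le_iff_ne_zero.mpr hki, ?_⟩
  rw [div_le_iff₀ hN] at hle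
  calc load Kbar x i ≤ k i * x k * #(Kbar.erase 0) := hle
    _ ≤ Kbar.sup degree * x k * #(Kbar.erase 0) := by gcongr; exact hx k hk
    _ = #(Kbar.erase 0) * Kbar.sup degree * x k := by ring

theorem potential_eq_of_mem_erase (ha : 0 < a) (hab : Real.log a = -b) {k : I → ℕ}
    (hk : k ∈ Kbar.erase 0) (hxk : 0 < x k) :
    potential a x k = Real.log (x k) + Real.log (confC k) + b := by
  have hxe : xeDef a x k = x k := if_neg (ne_of_mem_erase hk)
  rw [potential_eq ha (hxe ▸ hxk), hxe, hab, sub_neg_eq_add]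

variable [DecidableEq I]

theorem potential_single_le (hunit : ∀ i : I, Pi.single i 1 ∈ Kbar) (ha : 0 < a)
    (hab : Real.log a = -b) (hx : ∀ k ∈ Kbar.erase 0, 0 < x k) {B : ℝ} (i : I)
    (hB : x (Pi.single i 1) ≤ B) : potential a x (Pi.single i 1) ≤ Real.log B + b := by
  have hi : Pi.single i 1 ∈ Kbar.erase 0 := mem_erase.mpr ⟨by simp, hunit i⟩
  rw [potential_eq_of_mem_erase ha hab hi (hx _ hi)]
  have : confC (Pi.single i 1 : I → ℕ) = 1 := by
    simpa [confC] using confC_add_single (0 : I → ℕ) i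
  rw [this, Real.log_one, add_zero]
  gcongr
  exact hx _ hi

theorem le_potential_single (ha : 0 < a) (hab : Real.log a = -b)
    (hx : ∀ k ∈ Kbar.erase 0, 0 < x k) {T U c : ℝ}
    (hθ : ∀ k ∈ Kbar.erase 0, potentialDefect a x k ≤ T) (hU0 : 0 ≤ U)
    (hU : ∀ j, potential a x (Pi.single j 1) ≤ U) (hc : 0 < c) {i : I}
    (hi : c ≤ load Kbar x i) :
    Real.log (c / (#(Kbar.erase 0) * Kbar.sup degree)) + b - T - Kbar.sup degree * U
      ≤ potential a x (Pi.single i 1) := by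
  obtain ⟨k, hk, hki, hle⟩ := exists_load_le_mul (fun k hk => (hx k hk).le) (hc.trans_le hi)
  have hNm : (0 : ℝ) < #(Kbar.erase 0) * Kbar.sup degree :=
    (pos_iff_pos_of_mul_pos (hc.trans_le (hi.trans hle))).mpr (hx k hk)
  obtain ⟨k', rfl⟩ : ∃ k' : I → ℕ, k = k' + Pi.single i 1 :=
    ⟨_, (sub_single_add_single hki).symm⟩
  have hdeg : (degree k' : ℝ) ≤ Kbar.sup degree := by
    have := le_sup (f := degree) (mem_of_mem_erase hk)
    rw [degree_add_single] at this
    exact_mod_cast (Nat.le_succ _).trans this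
  have hlower : Real.log (c / (#(Kbar.erase 0) * Kbar.sup degree)) + b
      ≤ potential a x (k' + Pi.single i 1) := by
    rw [potential_eq_of_mem_erase ha hab hk (hx _ hk)]
    have := Real.log_nonneg (one_le_confC (k' + Pi.single i 1))
    have : Real.log (c / (#(Kbar.erase 0) * Kbar.sup degree))
        ≤ Real.log (x (k' + Pi.single i 1)) :=
      Real.log_le_log (by positivity) (by rw [div_le_iff₀' hNm]; linarith)
    linarith
  have hupper : ∑ j, (k' j : ℝ) * potential a x (Pi.single j 1) ≤ Kbar.sup degree * U :=
    calc ∑ j, (k' j : ℝ) * potential a x (Pi.single j 1) ≤ ∑ j, (k' j : ℝ) * U :=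
          sum_le_sum fun j _ => mul_le_mul_of_nonneg_left (hU j) (Nat.cast_nonneg _)
      _ = degree k' * U := by simp [degree, sum_mul]
      _ ≤ Kbar.sup degree * U := mul_le_mul_of_nonneg_right hdeg hU0
  have hθk := hθ _ hk
  rw [potentialDefect, sum_add_single_mul] at hθk
  linarith

theorem Lfun_sub_LPvalue_le (hunit : ∀ i : I, Pi.single i 1 ∈ Kbar) {ρ : I → ℝ}
    (hρ : ∀ i, 0 ≤ ρ i) (ha : 0 < a) (hab : Real.log a = -b) (hb : 0 < b)
    (hx : ∀ k ∈ Kbar.erase 0, 0 < x k) {s : ℝ} (hs : 0 ≤ s)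
    (hslack : ∀ k ∈ Kbar.erase 0,
      ∑ j, (k j : ℝ) * potential a x (Pi.single j 1) ≤ b + s) :
    Lfun Kbar a x - LPvalue Kbar ρ ≤
      (∑ k ∈ Kbar.erase 0, x k * (potentialDefect a x k - 1)
        + ∑ j, (load Kbar x j - ρ j) * potential a x (Pi.single j 1) + s * ∑ j, ρ j) / b := by
  set φ : I → ℝ := fun j => potential a x (Pi.single j 1)
  have hdual := le_LPvalue_of_dual_feasible hunit hρ (q := fun j => (φ j - s) / b) fun k hk => by
    have hdeg : (1 : ℝ) ≤ degree k := by
      obtain ⟨i, hi⟩ := Function.ne_iff.mp (ne_of_mem_erase hk)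
      exact_mod_cast (Nat.one_le_iff_ne_zero.mpr hi).trans (le_degree k i)
    have hsum : ∑ j, (k j : ℝ) * ((φ j - s) / b) =
        (∑ j, (k j : ℝ) * φ j - s * degree k) / b := by
      rw [degree, Nat.cast_sum, mul_sum, ← sum_sub_distrib, sum_div]
      exact sum_congr rfl fun _ _ => by ring
    rw [hsum, div_le_one hb]
    linarith [hslack k hk, le_mul_of_one_le_right hs hdeg]
  have hρq : ∑ j, ρ j * ((φ j - s) / b) = (∑ j, ρ j * φ j - s * ∑ j, ρ j) / b := by
    rw [mul_sum, ← sum_sub_distrib, sum_div]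
    exact sum_congr rfl fun _ _ => by ring
  rw [hρq, div_le_iff₀ hb] at hdual
  rw [Lfun_eq_sum_potential ha hab hx, le_div_iff₀ hb, sub_mul, div_mul_cancel₀ _ hb.ne']
  simp only [φ, sub_mul, sum_sub_distrib] at hdual ⊢
  linarith

theorem sum_mul_potential_single_le (ha : 0 < a) (hab : Real.log a = -b)
    (hx : ∀ k ∈ Kbar.erase 0, 0 < x k) {B T : ℝ} {k : I → ℕ} (hk : k ∈ Kbar.erase 0)
    (hxB : x k ≤ B) (hθ : -T ≤ potentialDefect a x k) :
    ∑ j, (k j : ℝ) * potential a x (Pi.single j 1)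
      ≤ Real.log B + Real.log (Kbar.sup degree).factorial + T + b := by
  have hc : Real.log (confC k) ≤ Real.log (Kbar.sup degree).factorial :=
    Real.log_le_log (confC_pos k) ((confC_le_factorial_degree k).trans (by
      exact_mod_cast Nat.factorial_le (le_sup (f := degree) (mem_of_mem_erase hk))))
  have := Real.log_le_log (hx k hk) hxB
  rw [potentialDefect, potential_eq_of_mem_erase ha hab hk (hx k hk)] at hθ
  linarith

theorem abs_potential_single_le (hunit : ∀ i : I, Pi.single i 1 ∈ Kbar) (ha : 0 < a)
    (hab : Real.log a = -b) (hb : 1 ≤ b) (hx : ∀ k ∈ Kbar.erase 0, 0 < x k) {B T c : ℝ}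
    (hB : 1 ≤ B) (hxB : ∀ k ∈ Kbar.erase 0, x k ≤ B)
    (hθ : ∀ k ∈ Kbar.erase 0, |potentialDefect a x k| ≤ T) (hc : 0 < c) {i : I}
    (hi : c ≤ load Kbar x i) :
    |potential a x (Pi.single i 1)| ≤ b * (|Real.log (c / (#(Kbar.erase 0) * Kbar.sup degree))|
      + T + (Kbar.sup degree + 1) * (Real.log B + 1)) := by
  have hsingle (j : I) : Pi.single j 1 ∈ Kbar.erase 0 := mem_erase.mpr ⟨by simp, hunit j⟩
  have hU (j : I) := potential_single_le hunit ha hab hx j (hxB _ (hsingle j))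
  have hlogB := Real.log_nonneg hB
  have hT : 0 ≤ T := (abs_nonneg _).trans (hθ _ (hsingle i))
  have hm : (0 : ℝ) ≤ Kbar.sup degree := Nat.cast_nonneg _
  have hlower := le_potential_single ha hab hx (fun k hk => (le_abs_self _).trans (hθ k hk))
    (by linarith) hU hc hi
  set l := Real.log (c / (#(Kbar.erase 0) * Kbar.sup degree))
  have := neg_abs_le l
  have : |l| ≤ b * |l| := le_mul_of_one_le_left (abs_nonneg l) hb
  have : T ≤ b * T := le_mul_of_one_le_left hT hb
  have : Kbar.sup degree * Real.log B ≤ b * (Kbar.sup degree * Real.log B) :=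
    le_mul_of_one_le_left (by positivity) hb
  have : Real.log B ≤ b * Real.log B := le_mul_of_one_le_left hlogB hb
  have : 0 ≤ b * (|l| + T + Kbar.sup degree * (Real.log B + 1)) := by positivity
  rw [abs_le]
  constructor <;> linarith [hU i]

theorem exists_Lfun_sub_LPvalue_le (hunit : ∀ i : I, Pi.single i 1 ∈ Kbar)
    (hmono : ∀ k ∈ Kbar, ∀ k' : I → ℕ, (∀ i, k' i ≤ k i) → k' ∈ Kbar)
    {ρ : I → ℝ} (hρ : ∀ i, 0 < ρ i) :
    ∃ C₁ C₂ : ℝ, ∀ (a b η : ℝ) (x : (I → ℕ) → ℝ),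
      0 < a → Real.log a = -b → 1 ≤ b → 0 ≤ η → (∀ i, 2 * η ≤ ρ i) →
      (∀ k ∈ Kbar.erase 0, 0 < x k) →
      (∀ i, |load Kbar x i - ρ i| ≤ η) →
      (∀ i : I, ∀ k k' : I → ℕ, isEdge Kbar k i → isEdge Kbar k' i →
        |chiDef a x k k' i| ≤ 1) →
      Lfun Kbar a x - LPvalue Kbar ρ ≤ C₁ / b + C₂ * η := by
  set m : ℕ := Kbar.sup degree
  set N : ℝ := ((Kbar.erase 0).card : ℝ)
  set S : ℝ := ∑ i, ρ i
  set B : ℝ := 2 * S + 1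
  set s : ℝ := Real.log B + Real.log m.factorial + m
  set Q : I → ℝ := fun i => |Real.log (ρ i / 2 / (N * m))| + m + (m + 1) * (Real.log B + 1)
  refine ⟨N * B * m + s * S, ∑ i, Q i, fun a b η x ha hab hb hη hηρ hx hload hchi => ?_⟩
  have hB : 1 ≤ B := by linarith [sum_nonneg fun j (_ : j ∈ univ) => (hρ j).le]
  have hs : 0 ≤ s := by
    have := Real.log_nonneg hB
    have := Real.log_nonneg (Nat.one_le_cast.mpr m.factorial_pos)
    positivity
  have hθ (k : I → ℕ) (hk : k ∈ Kbar.erase 0) : |potentialDefect a x k| ≤ m := by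
    have := abs_potentialDefect_le hunit hmono ha hx hchi k (mem_of_mem_erase hk)
    rw [mul_one] at this
    exact this.trans (by exact_mod_cast le_sup (f := degree) (mem_of_mem_erase hk))
  have hxB := le_of_load_le (fun k hk => (hx k hk).le) (B := B) fun i => by
    linarith [(abs_le.mp (hload i)).2, hηρ i, single_le_sum (fun j _ => (hρ j).le) (mem_univ i)]
  have hφ (i : I) : |potential a x (Pi.single i 1)| ≤ b * Q i :=
    abs_potential_single_le hunit ha hab hb hx hB hxB hθ (half_pos (hρ i))
      (by linarith [(abs_le.mp (hload i)).1, hηρ i])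
  have hslack (k : I → ℕ) (hk : k ∈ Kbar.erase 0) :
      ∑ j, (k j : ℝ) * potential a x (Pi.single j 1) ≤ b + s := by
    linarith [sum_mul_potential_single_le ha hab hx hk (hxB k hk) (neg_le_of_abs_le (hθ k hk))]
  have hA : ∑ k ∈ Kbar.erase 0, x k * (potentialDefect a x k - 1) ≤ N * B * m :=
    calc _ ≤ ∑ _k ∈ Kbar.erase 0, B * m := sum_le_sum fun k hk => by
            have := (le_abs_self _).trans (hθ k hk)
            nlinarith [hx k hk, hxB k hk]
      _ = N * B * m := by rw [sum_const, nsmul_eq_mul]; ring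
  have hD :
      ∑ j, (load Kbar x j - ρ j) * potential a x (Pi.single j 1) ≤ b * η * ∑ i, Q i := by
    rw [mul_sum]
    refine sum_le_sum fun j _ => ?_
    calc _ ≤ |load Kbar x j - ρ j| * |potential a x (Pi.single j 1)| :=
          (le_abs_self _).trans (abs_mul _ _).le
      _ ≤ η * (b * Q j) := mul_le_mul (hload j) (hφ j) (abs_nonneg _) hη
      _ = b * η * Q j := by ring
  calc Lfun Kbar a x - LPvalue Kbar ρ
      ≤ _ := Lfun_sub_LPvalue_le hunit (fun i => (hρ i).le) ha hab (by linarith) hx hs hslack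
    _ ≤ (N * B * m + b * η * ∑ i, Q i + s * S) / b := by gcongr
    _ = _ := by field_simp; ring

end Estimate

theorem L_close_to_LPvalue_general
    {I : Type*} [Fintype I] [DecidableEq I]
    (Kbar : Finset (I → ℕ))
    (hunit : ∀ i : I, Pi.single i 1 ∈ Kbar)
    (hmono : ∀ k ∈ Kbar, ∀ k' : I → ℕ, (∀ i, k' i ≤ k i) → k' ∈ Kbar)
    (ρ : I → ℝ) (hρ : ∀ i, 0 < ρ i)
    (p ε : ℝ) (hp : p ∈ Set.Ioo (0 : ℝ) 1) (hε : ε ∈ Set.Ioo (0 : ℝ) (1/2))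
    (γ : ℝ) (hγ : 0 < γ) :
    ∃ δ₁ > (0 : ℝ), ∃ r₀ : ℝ, ∀ r : ℝ, r₀ ≤ r →
      ∀ x : (I → ℕ) → ℝ, (∀ k ∈ Kbar.erase 0, 0 < x k) →
        (∀ i : I, |∑ k ∈ Kbar.erase 0, (k i : ℝ) * x k - ρ i| ≤
          r ^ (-(1 : ℝ)/2 + ε) / (Fintype.card I : ℝ)) →
        (∀ i : I, ∀ k k' : I → ℕ, isEdge Kbar k i → isEdge Kbar k' i →
          |chiDef (r ^ (p - 1)) x k k' i| ≤ δ₁) →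
        Lfun Kbar (r ^ (p - 1)) x - LPvalue Kbar ρ ≤ γ := by
  obtain ⟨C₁, C₂, hC⟩ := exists_Lfun_sub_LPvalue_le hunit hmono hρ
  set b : ℝ → ℝ := fun r => (1 - p) * Real.log r
  set η : ℝ → ℝ := fun r => r ^ (-(1 : ℝ)/2 + ε) / Fintype.card I
  have hb : Tendsto b atTop atTop := Real.tendsto_log_atTop.const_mul_atTop (by linarith [hp.2])
  have hη : Tendsto η atTop (nhds 0) := by
    have hexp : -(1 : ℝ)/2 + ε = -(1/2 - ε) := by ring
    simpa [η, hexp] using (tendsto_rpow_neg_atTop (y := 1/2 - ε) (by linarith [hε.2])).div_const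
      (Fintype.card I : ℝ)
  have hbound : Tendsto (fun r => C₁ / b r + C₂ * η r) atTop (nhds 0) := by
    simpa [div_eq_mul_inv] using (hb.inv_tendsto_atTop.const_mul C₁).add (hη.const_mul C₂)
  obtain ⟨r₀, hr₀⟩ := ((eventually_gt_atTop 0).and ((hb.eventually_ge_atTop 1).and
    ((eventually_all.mpr fun i => hη.eventually (gt_mem_nhds (half_pos (hρ i)))).and
      (hbound.eventually (gt_mem_nhds hγ))))).exists_forall_of_atTop
  refine ⟨1, one_pos, r₀, fun r hr x hx hload hchi => ?_⟩
  obtain ⟨hr, hbr, hηr, hγr⟩ := hr₀ r hr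
  have hab : Real.log (r ^ (p - 1)) = -b r := by rw [Real.log_rpow hr]; ring
  have := hC _ (b r) (η r) x (by positivity) hab hbr (by positivity)
    (fun i => by linarith [hηr i]) hx hload hchi
  linarith

/-- Lemma `lem-close-to-opt2`: for any `γ > 0` there is `δ₁ > 0` such
that for all sufficiently large `r`, with `a = r^{p−1}`: if `x` has positive coordinates,
nearly satisfies the conservation laws, and `|χ_{k,k',i}(x)| ≤ δ₁` for all pairs of edges,
then `L^(a)(x) − L* ≤ γ`. -/
theorem L_close_to_LPvalue
    {I : Type*} [Fintype I] [DecidableEq I] [Nonempty I]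
    (Kbar : Finset (I → ℕ))
    (h0 : (0 : I → ℕ) ∈ Kbar)
    (hunit : ∀ i : I, Pi.single i 1 ∈ Kbar)
    (hmono : ∀ k ∈ Kbar, ∀ k' : I → ℕ, (∀ i, k' i ≤ k i) → k' ∈ Kbar)
    (ρ : I → ℝ) (hρ : ∀ i, 0 < ρ i)
    (p ε : ℝ) (hp : p ∈ Set.Ioo (0 : ℝ) 1) (hε : ε ∈ Set.Ioo (0 : ℝ) (1/2))
    (γ : ℝ) (hγ : 0 < γ) :
    ∃ δ₁ > (0 : ℝ), ∃ r₀ : ℝ, ∀ r : ℝ, r₀ ≤ r →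
      ∀ x : (I → ℕ) → ℝ, (∀ k ∈ Kbar.erase 0, 0 < x k) →
        (∀ i : I, |∑ k ∈ Kbar.erase 0, (k i : ℝ) * x k - ρ i| ≤
          r ^ (-(1 : ℝ)/2 + ε) / (Fintype.card I : ℝ)) →
        (∀ i : I, ∀ k k' : I → ℕ, isEdge Kbar k i → isEdge Kbar k' i →
          |chiDef (r ^ (p - 1)) x k k' i| ≤ δ₁) →
        Lfun Kbar (r ^ (p - 1)) x - LPvalue Kbar ρ ≤ γ :=
  L_close_to_LPvalue_general Kbar hunit hmono ρ hρ p ε hp hε γ hγ
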